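/- The triple (kX_∞, ⋄, P) is the free Rota-Baxter algebra of weight λ on the set X: (kX_∞, ⋄) is a unital associative k-algebra, P satisfies the Rota-Baxter identity P(u)⋄P(v) = P(u⋄P(v)) + P(P(u)⋄v) + λP(u⋄v) for all u, v, and for every Rota-Baxter algebra (R, Q) of weight λ and every set map f : X → R there is a unique k-algebra homomorphism f̄ : kX_∞ → R with f̄ ∘ P = Q ∘ f̄ and f̄(j_X(x)) = f(x) for all x ∈ X, where j_X : X → kX_∞ is the inclusion of letters. -/

import Mathlib

open TensorProduct

universe u v

/-- Letters of Rota-Baxter bracketed words: either a variable from `X` or a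
bracketed word `⌊w⌋` (a list of letters). -/
inductive RBL (X : Type u) : Type u
  | var : X → RBL X
  | br : List (RBL X) → RBL X

namespace RBL

variable {X : Type u}

/-- `a.isBr = true` iff the letter `a` is a bracketed element `⌊w⌋ ∈ ⌊X_∞⌋`. -/
def isBr : RBL X → Bool
  | var _ => false
  | br _ => true

mutual
  /-- Validity of a letter: the inside of a bracket must be a Rota-Baxter bracketed word. -/
  def valid : RBL X → Prop
    | var _ => True
    | br l => wordValid l
  /-- `wordValid l` says that the list of letters `l` is a Rota-Baxter bracketed word,
  i.e. all letters are valid and the letters alternate (no two consecutive brackets). -/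
  def wordValid : List (RBL X) → Prop
    | [] => True
    | [a] => valid a
    | a :: b :: l => valid a ∧ ¬(a.isBr = true ∧ b.isBr = true) ∧ wordValid (b :: l)
end

lemma wordValid_nil : wordValid ([] : List (RBL X)) := by simp [wordValid]

lemma wordValid_var (x : X) : wordValid [var x] := by simp [wordValid, valid]

lemma wordValid_br {l : List (RBL X)} (h : wordValid l) : wordValid [br l] := by
  simpa [wordValid, valid] using h

mutual
  /-- The total degree of a letter. -/
  def degL : RBL X → ℕ
    | var _ => 1
    | br l => degW l + 1
  /-- The total degree of a word: the number of occurrences of brackets (i.e. of `P`)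
  plus the number of occurrences of letters of `X`. -/
  def degW : List (RBL X) → ℕ
    | [] => 0
    | a :: l => degL a + degW l
end

end RBL

/-- The set `X_∞` of Rota-Baxter bracketed words on `X`. -/
def RBWord (X : Type u) : Type u := {l : List (RBL X) // RBL.wordValid l}

namespace RBWord

variable {X : Type u}

/-- The empty word `1`. -/
def one : RBWord X := ⟨[], RBL.wordValid_nil⟩

/-- The total degree of a Rota-Baxter bracketed word. -/
def deg (w : RBWord X) : ℕ := RBL.degW w.1

end RBWord

variable (k : Type v) [CommRing k] (X : Type u)

/-- The free `k`-module `kX_∞` on the Rota-Baxter bracketed words. -/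
abbrev RBMod : Type max u v := RBWord X →₀ k

variable {X}

/-- A Rota-Baxter bracketed word viewed as a basis element of `kX_∞`. -/
noncomputable def sing (w : RBWord X) : RBMod k X := Finsupp.single w 1

variable (X)

/-- The Rota-Baxter operator `P` on `kX_∞`, sending a basis word `w` to `⌊w⌋`. -/
noncomputable def Pop : RBMod k X →ₗ[k] RBMod k X :=
  Finsupp.lmapDomain k k fun w => (⟨[RBL.br w.1], RBL.wordValid_br w.2⟩ : RBWord X)

/-- Concatenation on the left by `u₀` and on the right by `v₀`, as a linear map on `kX_∞`
(sending basis words whose concatenation is not valid to `0`; in all uses below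
the concatenations are valid). -/
noncomputable def concatLR (u₀ v₀ : List (RBL X)) : RBMod k X →ₗ[k] RBMod k X :=
  Finsupp.lsum k fun w =>
    letI := Classical.dec (RBL.wordValid (u₀ ++ w.1 ++ v₀))
    if h : RBL.wordValid (u₀ ++ w.1 ++ v₀) then
      Finsupp.lsingle (⟨u₀ ++ w.1 ++ v₀, h⟩ : RBWord X) else 0

/-- The counit `ε : kX_∞ → k`, `ε(1) = 1` and `ε(w) = 0` for basis words `w ≠ 1`. -/
noncomputable def eps : RBMod k X →ₗ[k] k := Finsupp.lapply RBWord.one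

/-- The homogeneous component `H^(n)` of `kX_∞`: the span of the basis words of total
degree `n`. -/
noncomputable def Hdeg (n : ℕ) : Submodule k (RBMod k X) :=
  Finsupp.supported k k {w : RBWord X | w.deg = n}

variable (lam : k)

/-- The data of the product `⋄` on the free Rota-Baxter algebra `kX_∞` of weight `lam`,
together with its recursive defining equations:
* if the concatenation of `u` and `v` is again a Rota-Baxter bracketed word (in particular
  if `u` or `v` is empty, or if the last letter of `u` or the first letter of `v` is a
  variable), then `u ⋄ v` is the concatenation `uv`;
* if `u = u₀⌊ā⌋` and `v = ⌊b̄⌋v₀`, then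
  `u ⋄ v = u₀(⌊⌊ā⌋ ⋄ b̄⌋ + ⌊ā ⋄ ⌊b̄⌋⌋ + λ⌊ā ⋄ b̄⌋)v₀`. -/
structure FreeRBAData where
  /-- the product `⋄`, as a `k`-bilinear map -/
  d : RBMod k X →ₗ[k] RBMod k X →ₗ[k] RBMod k X
  d_concat : ∀ (u v : RBWord X) (h : RBL.wordValid (u.1 ++ v.1)),
    d (sing k u) (sing k v) = sing k ⟨u.1 ++ v.1, h⟩
  d_br : ∀ (u₀ v₀ : List (RBL X)) (a b : RBWord X)
    (hu : RBL.wordValid (u₀ ++ [RBL.br a.1])) (hv : RBL.wordValid (RBL.br b.1 :: v₀)),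
    d (sing k ⟨u₀ ++ [RBL.br a.1], hu⟩) (sing k ⟨RBL.br b.1 :: v₀, hv⟩)
      = concatLR k X u₀ v₀
          (Pop k X (d (Pop k X (sing k a)) (sing k b))
            + Pop k X (d (sing k a) (Pop k X (sing k b)))
            + lam • Pop k X (d (sing k a) (sing k b)))

namespace FreeRBAData

variable {k X lam}

/-- The componentwise product `⋄ ⊗ ⋄` on `kX_∞ ⊗ kX_∞`. -/
noncomputable def mulT (D : FreeRBAData k X lam) :
    (RBMod k X ⊗[k] RBMod k X) →ₗ[k] (RBMod k X ⊗[k] RBMod k X) →ₗ[k]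
      (RBMod k X ⊗[k] RBMod k X) :=
  TensorProduct.map₂ D.d D.d

end FreeRBAData

/-- The free Rota-Baxter algebra `kX_∞` of weight `lam` together with the coproduct `Δ`,
characterized by its recursive defining equations:
`Δ(1) = 1 ⊗ 1`, `Δ(x) = x ⊗ 1 + 1 ⊗ x` for `x ∈ X`,
`Δ(⌊w⌋) = ⌊w⌋ ⊗ 1 + (id ⊗ P)Δ(w)`, and
`Δ(w₁ ⋄ ⋯ ⋄ w_m) = Δ(w₁) ⋄ ⋯ ⋄ Δ(w_m)` for the `⋄`-factorization of a word into its
(alternating) sequence of letters. -/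
structure FreeRBBialgData extends FreeRBAData k X lam where
  /-- the coproduct `Δ` -/
  Dl : RBMod k X →ₗ[k] (RBMod k X ⊗[k] RBMod k X)
  Dl_one : Dl (sing k RBWord.one) = sing k RBWord.one ⊗ₜ[k] sing k RBWord.one
  Dl_var : ∀ (x : X),
    Dl (sing k ⟨[RBL.var x], RBL.wordValid_var x⟩)
      = sing k ⟨[RBL.var x], RBL.wordValid_var x⟩ ⊗ₜ[k] sing k RBWord.one
        + sing k RBWord.one ⊗ₜ[k] sing k ⟨[RBL.var x], RBL.wordValid_var x⟩
  Dl_br : ∀ w : RBWord X,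
    Dl (Pop k X (sing k w))
      = Pop k X (sing k w) ⊗ₜ[k] sing k RBWord.one
        + TensorProduct.map LinearMap.id (Pop k X) (Dl (sing k w))
  Dl_cons : ∀ (a : RBL X) (l : List (RBL X)) (h : RBL.wordValid (a :: l))
    (ha : RBL.wordValid [a]) (hl : RBL.wordValid l), l ≠ [] →
    Dl (sing k ⟨a :: l, h⟩)
      = TensorProduct.map₂ d d (Dl (sing k ⟨[a], ha⟩)) (Dl (sing k ⟨l, hl⟩))

namespace RBL

variable {X : Type u}

lemma wordValid_map_var (s : List X) : wordValid (s.map RBL.var) := by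
  induction s with
  | nil => exact wordValid_nil
  | cons a t ih =>
    cases t with
    | nil => exact wordValid_var a
    | cons b t' =>
      simp only [List.map_cons] at ih ⊢
      exact ⟨by simp [valid], by simp [isBr], ih⟩

end RBL

variable {X}

/-- The word `x₁ ⋯ x_m ∈ M(X)` as a basis element of `kX_∞`. -/
noncomputable def varWord (s : List X) : RBMod k X :=
  sing k ⟨s.map RBL.var, RBL.wordValid_map_var s⟩

/-- A letter in `X ∪ ⌊X_∞⌋`, viewed as a basis element of `kX_∞` (invalid letters are
sent to `0`; they do not occur below). -/
noncomputable def letterMod (a : RBL X) : RBMod k X :=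
  letI := Classical.dec (RBL.wordValid [a])
  if h : RBL.wordValid [a] then sing k ⟨[a], h⟩ else 0

variable (X)

/-- The tensor product `H^(p) ⊗ H^(q)` of homogeneous components, as a submodule of
`kX_∞ ⊗ kX_∞`. -/
noncomputable def HdegT (p q : ℕ) : Submodule k (RBMod k X ⊗[k] RBMod k X) :=
  Submodule.map₂ (TensorProduct.mk k (RBMod k X) (RBMod k X)) (Hdeg k X p) (Hdeg k X q)

namespace FreeRBAData

variable {k X lam}

/-- The `⋄`-product `w₁ ⋄ (w₂ ⋄ (⋯ ⋄ (w_m ⋄ 1)))` of a sequence of letters. -/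
noncomputable def prodList (D : FreeRBAData k X lam) (l : List (RBL X)) : RBMod k X :=
  l.foldr (fun a acc => D.d (letterMod k a) acc) (sing k RBWord.one)

end FreeRBAData
universe w

/-!
Concatenation of words, extended bilinearly and set to `0` when two brackets become adjacent,
is an associative product `cat` on `kX_∞`, and `⋄` agrees with it except at a junction of two
brackets, where the Rota-Baxter identity takes over. So `⋄` only sees the letters at the
junction: `(x·y) ⋄ z = x·(y ⋄ z)` and `x ⋄ (y·z) = (x ⋄ y)·z` whenever `y` has no constant term.
Associativity follows by induction on the total degree: a factor of breadth at least two splits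
off a letter by this locality, a variable letter acts by concatenation, and three brackets
associate by expanding with the Rota-Baxter identity, which needs associativity only for triples
of smaller degree. A morphism to a Rota-Baxter algebra `(R, Q)` is forced on words (`f` on
variables, `Q` on brackets) and is multiplicative by the same kind of induction; for `(k, 0)` it
is the augmentation `ε`, whose multiplicativity is what locality uses.
-/

namespace RBL

variable {X : Type u}

def Compatible (a b : RBL X) : Prop := ¬(a.isBr = true ∧ b.isBr = true)

theorem not_compatible_iff {a b : RBL X} :
    ¬Compatible a b ↔ ∃ α β, a = br α ∧ b = br β := by
  cases a <;> cases b <;> simp [Compatible, isBr]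

theorem wordValid_iff (l : List (RBL X)) :
    wordValid l ↔ (∀ a ∈ l, valid a) ∧ l.IsChain Compatible := by
  induction l with
  | nil => simp [wordValid]
  | cons a t ih =>
    cases t with
    | nil => simp [wordValid]
    | cons b t =>
      rw [wordValid, ih, List.isChain_cons_cons, Compatible]
      simp only [List.forall_mem_cons]
      tauto

theorem wordValid_append_iff (l₁ l₂ : List (RBL X)) :
    wordValid (l₁ ++ l₂) ↔ wordValid l₁ ∧ wordValid l₂ ∧
      ∀ a ∈ l₁.getLast?, ∀ b ∈ l₂.head?, Compatible a b := by
  simp only [wordValid_iff, List.forall_mem_append, List.isChain_append]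
  tauto

theorem wordValid.of_append_left {l₁ l₂ : List (RBL X)} (h : wordValid (l₁ ++ l₂)) :
    wordValid l₁ :=
  ((wordValid_append_iff l₁ l₂).1 h).1

theorem wordValid.of_append_right {l₁ l₂ : List (RBL X)} (h : wordValid (l₁ ++ l₂)) :
    wordValid l₂ :=
  ((wordValid_append_iff l₁ l₂).1 h).2.1

theorem wordValid_singleton_br_iff {l : List (RBL X)} : wordValid [br l] ↔ wordValid l := by
  simp [wordValid, valid]

theorem wordValid.of_br_cons {l v : List (RBL X)} (h : wordValid (br l :: v)) : wordValid l :=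
  wordValid_singleton_br_iff.1 (wordValid.of_append_left (l₁ := [br l]) h)

theorem wordValid.of_append_br {u l : List (RBL X)} (h : wordValid (u ++ [br l])) :
    wordValid l :=
  wordValid_singleton_br_iff.1 h.of_append_right

theorem wordValid_append_br_append {u v a b s : List (RBL X)} (hu : wordValid (u ++ [br a]))
    (hv : wordValid (br b :: v)) (hs : wordValid s) : wordValid (u ++ [br s] ++ v) := by
  have hv' := (wordValid_append_iff [br b] v).1 hv
  rw [wordValid_append_iff, wordValid_append_iff] at *
  simp_all [wordValid_singleton_br_iff, Compatible, isBr]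

theorem degL_pos (a : RBL X) : 0 < degL a := by
  cases a <;> simp [degL]

theorem degL_br (l : List (RBL X)) : degL (br l) = degW l + 1 := by
  simp [degL]

theorem degW_nil : degW ([] : List (RBL X)) = 0 := by
  simp [degW]

theorem degW_cons (a : RBL X) (l : List (RBL X)) : degW (a :: l) = degL a + degW l := by
  simp [degW]

theorem degW_append (l₁ l₂ : List (RBL X)) : degW (l₁ ++ l₂) = degW l₁ + degW l₂ := by
  induction l₁ with
  | nil => simp [degW]
  | cons a t ih => simp [degW_cons, ih, Nat.add_assoc]

theorem degW_pos {l : List (RBL X)} (h : l ≠ []) : 0 < degW l := by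
  obtain ⟨a, t, rfl⟩ := List.exists_cons_of_ne_nil h
  simpa [degW_cons] using Or.inl (degL_pos a)

theorem degW_singleton_br (l : List (RBL X)) : degW [br l] = degW l + 1 := by
  simp [degW, degL]

end RBL

namespace RBMod

open RBL

variable (k : Type v) [CommRing k] {X : Type u}

open Classical in
noncomputable def ofList (l : List (RBL X)) : RBMod k X :=
  if h : wordValid l then sing k ⟨l, h⟩ else 0

variable {k}

theorem ofList_of_wordValid {l : List (RBL X)} (h : wordValid l) :
    ofList k l = sing k ⟨l, h⟩ :=
  dif_pos h

theorem ofList_of_not_wordValid {l : List (RBL X)} (h : ¬wordValid l) : ofList k l = 0 :=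
  dif_neg h

theorem sing_eq_ofList (w : RBWord X) : sing k w = ofList k w.1 :=
  (ofList_of_wordValid w.2).symm

theorem ofList_nil : ofList k ([] : List (RBL X)) = sing k RBWord.one :=
  ofList_of_wordValid wordValid_nil

theorem Pop_ofList (l : List (RBL X)) : Pop k X (ofList k l) = ofList k [br l] := by
  by_cases h : wordValid l
  · rw [ofList_of_wordValid h, ofList_of_wordValid (wordValid_br h)]
    exact Finsupp.mapDomain_single
  · rw [ofList_of_not_wordValid h, ofList_of_not_wordValid (mt wordValid_singleton_br_iff.1 h),
      map_zero]

@[elab_as_elim]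
theorem induction_on {motive : RBMod k X → Prop} (x : RBMod k X) (zero : motive 0)
    (add : ∀ x y, motive x → motive y → motive (x + y))
    (smul : ∀ (c : k) x, motive x → motive (c • x)) (sing : ∀ w, motive (sing k w)) :
    motive x :=
  Finsupp.induction_linear x zero add fun w c => by
    rw [← Finsupp.smul_single_one]
    exact smul c _ (sing w)

theorem lhom_ext {M : Type*} [AddCommMonoid M] [Module k M] {f g : RBMod k X →ₗ[k] M}
    (h : ∀ w, f (sing k w) = g (sing k w)) : f = g :=
  Finsupp.lhom_ext fun w c => by
    rw [← Finsupp.smul_single_one, map_smul, map_smul]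
    exact congrArg _ (h w)

theorem apply_eq_of_eps_eq_zero {M : Type*} [AddCommMonoid M] [Module k M]
    {f g : RBMod k X →ₗ[k] M} (h : ∀ w, w ≠ RBWord.one → f (sing k w) = g (sing k w))
    {x : RBMod k X} (hx : eps k X x = 0) : f x = g x := by
  rw [← Finsupp.sum_single x, Finsupp.sum, map_sum, map_sum]
  refine Finset.sum_congr rfl fun w hw => ?_
  rw [← Finsupp.smul_single_one, map_smul, map_smul]
  refine congrArg _ (h w ?_)
  rintro rfl
  exact Finsupp.mem_support_iff.1 hw hx

variable (k X) in
/-- Concatenation of words, extended bilinearly; it is `0` on two words whose concatenation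
has two adjacent brackets. -/
noncomputable def cat : RBMod k X →ₗ[k] RBMod k X →ₗ[k] RBMod k X :=
  Finsupp.linearCombination k fun u =>
    Finsupp.linearCombination k fun w => ofList k (u.1 ++ w.1)

theorem cat_sing_sing (u w : RBWord X) :
    cat k X (sing k u) (sing k w) = ofList k (u.1 ++ w.1) := by
  rw [cat, sing, sing, Finsupp.linearCombination_single, one_smul,
    Finsupp.linearCombination_single, one_smul]

theorem cat_ofList_ofList (u w : List (RBL X)) :
    cat k X (ofList k u) (ofList k w) = ofList k (u ++ w) := by
  by_cases hu : wordValid u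
  · by_cases hw : wordValid w
    · rw [ofList_of_wordValid hu, ofList_of_wordValid hw]
      exact cat_sing_sing ⟨u, hu⟩ ⟨w, hw⟩
    · rw [ofList_of_not_wordValid hw, map_zero,
        ofList_of_not_wordValid (mt wordValid.of_append_right hw)]
  · rw [ofList_of_not_wordValid hu, map_zero, LinearMap.zero_apply,
      ofList_of_not_wordValid (mt wordValid.of_append_left hu)]

theorem ofList_cons_eq_cat (a : RBL X) (l : List (RBL X)) :
    ofList k (a :: l) = cat k X (ofList k [a]) (ofList k l) :=
  (cat_ofList_ofList [a] l).symm

theorem cat_assoc (x y z : RBMod k X) : cat k X (cat k X x y) z = cat k X x (cat k X y z) := by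
  induction x using induction_on with
  | zero => simp
  | add x x' hx hx' => simp only [map_add, LinearMap.add_apply, hx, hx']
  | smul c x hx => simp only [map_smul, LinearMap.smul_apply, hx]
  | sing u =>
  induction y using induction_on with
  | zero => simp
  | add y y' hy hy' => simp only [map_add, LinearMap.add_apply, hy, hy']
  | smul c y hy => simp only [map_smul, LinearMap.smul_apply, hy]
  | sing w =>
  induction z using induction_on with
  | zero => simp
  | add z z' hz hz' => simp only [map_add, hz, hz']
  | smul c z hz => simp only [map_smul, hz]
  | sing t =>
  simp only [sing_eq_ofList, cat_ofList_ofList, List.append_assoc]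

theorem cat_one_left (x : RBMod k X) : cat k X (sing k RBWord.one) x = x := by
  induction x using induction_on with
  | zero => simp
  | add x x' hx hx' => simp only [map_add, hx, hx']
  | smul c x hx => simp only [map_smul, hx]
  | sing w => rw [← ofList_nil, sing_eq_ofList, cat_ofList_ofList, List.nil_append]

theorem cat_one_right (x : RBMod k X) : cat k X x (sing k RBWord.one) = x := by
  induction x using induction_on with
  | zero => simp
  | add x x' hx hx' => simp only [map_add, LinearMap.add_apply, hx, hx']
  | smul c x hx => simp only [map_smul, LinearMap.smul_apply, hx]
  | sing w => rw [← ofList_nil, sing_eq_ofList, cat_ofList_ofList, List.append_nil]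

theorem concatLR_eq_cat (u w : List (RBL X)) (x : RBMod k X) :
    concatLR k X u w x = cat k X (cat k X (ofList k u) x) (ofList k w) := by
  induction x using induction_on with
  | zero => simp
  | add x x' hx hx' => simp only [map_add, LinearMap.add_apply, hx, hx']
  | smul c x hx => simp only [map_smul, LinearMap.smul_apply, hx]
  | sing t =>
    have hcat : concatLR k X u w (sing k t) = ofList k (u ++ t.1 ++ w) := by
      simp only [concatLR, sing, Finsupp.lsum_single]
      split_ifs with h
      · rw [ofList_of_wordValid h]; rfl
      · rw [ofList_of_not_wordValid h]; rfl
    rw [hcat, sing_eq_ofList, cat_ofList_ofList, cat_ofList_ofList]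

theorem cat_ofList_Pop_of_not_wordValid {u a : List (RBL X)} (hu : ¬wordValid (u ++ [br a]))
    (ha : wordValid a) (t : RBMod k X) : cat k X (ofList k u) (Pop k X t) = 0 := by
  induction t using induction_on with
  | zero => simp
  | add t t' ht ht' => simp only [map_add, ht, ht', add_zero]
  | smul c t ht => simp only [map_smul, ht, smul_zero]
  | sing s =>
    rw [sing_eq_ofList, Pop_ofList, cat_ofList_ofList, ofList_of_not_wordValid]
    intro hs
    exact hu (by simpa using wordValid_append_br_append hs (v := []) (wordValid_br ha) ha)

theorem cat_Pop_ofList_of_not_wordValid {w b : List (RBL X)} (hw : ¬wordValid (br b :: w))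
    (hb : wordValid b) (t : RBMod k X) : cat k X (Pop k X t) (ofList k w) = 0 := by
  induction t using induction_on with
  | zero => simp
  | add t t' ht ht' => simp only [map_add, LinearMap.add_apply, ht, ht', add_zero]
  | smul c t ht => simp only [map_smul, LinearMap.smul_apply, ht, smul_zero]
  | sing s =>
    rw [sing_eq_ofList, Pop_ofList, cat_ofList_ofList, ofList_of_not_wordValid]
    intro hs
    simpa using hw (wordValid_append_br_append (u := []) (wordValid_br hb) hs hb)

end RBMod

namespace FreeRBAData

open RBL RBMod

variable {k : Type v} [CommRing k] {X : Type u} {lam : k} (D : FreeRBAData k X lam)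

theorem d_ofList_ofList {u w : List (RBL X)}
    (h : ∀ a ∈ u.getLast?, ∀ b ∈ w.head?, Compatible a b) :
    D.d (ofList k u) (ofList k w) = ofList k (u ++ w) := by
  by_cases hu : wordValid u
  · by_cases hw : wordValid w
    · have huw := (wordValid_append_iff u w).2 ⟨hu, hw, h⟩
      rw [ofList_of_wordValid hu, ofList_of_wordValid hw, ofList_of_wordValid huw]
      exact D.d_concat ⟨u, hu⟩ ⟨w, hw⟩ huw
    · rw [ofList_of_not_wordValid hw, map_zero,
        ofList_of_not_wordValid (mt wordValid.of_append_right hw)]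
  · rw [ofList_of_not_wordValid hu, map_zero, LinearMap.zero_apply,
      ofList_of_not_wordValid (mt wordValid.of_append_left hu)]

theorem one_d (x : RBMod k X) : D.d (sing k RBWord.one) x = x := by
  have : D.d (sing k RBWord.one) = LinearMap.id := lhom_ext fun w => by
    rw [← ofList_nil, sing_eq_ofList, D.d_ofList_ofList (by simp), List.nil_append]
    rfl
  rw [this, LinearMap.id_apply]

theorem d_one (x : RBMod k X) : D.d x (sing k RBWord.one) = x := by
  have : D.d.flip (sing k RBWord.one) = LinearMap.id := lhom_ext fun w => by
    rw [LinearMap.flip_apply, ← ofList_nil, sing_eq_ofList, D.d_ofList_ofList (by simp),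
      List.append_nil]
    rfl
  exact LinearMap.congr_fun this x

theorem d_Pop_Pop (x y : RBMod k X) :
    D.d (Pop k X x) (Pop k X y)
      = Pop k X (D.d x (Pop k X y) + D.d (Pop k X x) y + lam • D.d x y) := by
  induction x using induction_on with
  | zero => simp
  | add x x' hx hx' =>
    simp only [map_add, map_smul, LinearMap.add_apply, smul_add, hx, hx']
    abel
  | smul c x hx =>
    simp only [map_add, map_smul, LinearMap.smul_apply, smul_add, hx]
    module
  | sing a =>
  induction y using induction_on with
  | zero => simp
  | add y y' hy hy' =>
    simp only [map_add, map_smul, smul_add, hy, hy']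
    abel
  | smul c y hy =>
    simp only [map_add, map_smul, smul_add, hy]
    module
  | sing b =>
  have hbr := D.d_br [] [] a b (wordValid_br a.2) (wordValid_br b.2)
  rw [concatLR_eq_cat, ofList_nil, cat_one_left, cat_one_right] at hbr
  rw [sing_eq_ofList, sing_eq_ofList, Pop_ofList, Pop_ofList] at hbr ⊢
  rw [← ofList_of_wordValid, ← ofList_of_wordValid, List.nil_append] at hbr
  rw [hbr, map_add, map_add, map_smul, add_comm (Pop k X (D.d (ofList k _) _))]

theorem d_ofList_br (u w a b : List (RBL X)) :
    D.d (ofList k (u ++ [br a])) (ofList k (br b :: w))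
      = cat k X (cat k X (ofList k u) (D.d (Pop k X (ofList k a)) (Pop k X (ofList k b))))
          (ofList k w) := by
  -- Unless all four pieces are words both sides vanish: the middle factor on the right lies in
  -- the range of `Pop`, and a bracket can then neither follow `u` nor precede `w`.
  by_cases ha : wordValid a
  swap
  · rw [ofList_of_not_wordValid ha, ofList_of_not_wordValid (mt wordValid.of_append_br ha)]
    simp
  by_cases hb : wordValid b
  swap
  · rw [ofList_of_not_wordValid hb, ofList_of_not_wordValid (mt wordValid.of_br_cons hb)]
    simp
  by_cases hu : wordValid (u ++ [br a])
  swap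
  · rw [ofList_of_not_wordValid hu, D.d_Pop_Pop, cat_ofList_Pop_of_not_wordValid hu ha]
    simp
  by_cases hw : wordValid (br b :: w)
  swap
  · rw [ofList_of_not_wordValid hw, D.d_Pop_Pop, cat_assoc,
      cat_Pop_ofList_of_not_wordValid hw hb]
    simp
  rw [ofList_of_wordValid hu, ofList_of_wordValid hw, D.d_br u w ⟨a, ha⟩ ⟨b, hb⟩ hu hw,
    concatLR_eq_cat, D.d_Pop_Pop, ← ofList_of_wordValid ha, ← ofList_of_wordValid hb]
  simp only [map_add, map_smul, LinearMap.add_apply, LinearMap.smul_apply]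
  abel

theorem d_cat_ofList_left (a : List (RBL X)) {m : List (RBL X)} (hm : m ≠ [])
    (b : List (RBL X)) :
    D.d (cat k X (ofList k a) (ofList k m)) (ofList k b)
      = cat k X (ofList k a) (D.d (ofList k m) (ofList k b)) := by
  obtain ⟨m₀, c, rfl⟩ := (List.eq_nil_or_concat' m).resolve_left hm
  rw [cat_ofList_ofList]
  cases b with
  | nil => rw [ofList_nil, d_one, d_one, cat_ofList_ofList]
  | cons e b₀ =>
    by_cases hce : Compatible c e
    · rw [D.d_ofList_ofList (by simpa using hce), D.d_ofList_ofList (by simpa using hce),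
        cat_ofList_ofList, List.append_assoc]
    · obtain ⟨α, β, rfl, rfl⟩ := not_compatible_iff.1 hce
      rw [← List.append_assoc, d_ofList_br, d_ofList_br, ← cat_ofList_ofList a m₀]
      simp only [cat_assoc]

theorem d_cat_ofList_right (a : List (RBL X)) {m : List (RBL X)} (hm : m ≠ [])
    (b : List (RBL X)) :
    D.d (ofList k a) (cat k X (ofList k m) (ofList k b))
      = cat k X (D.d (ofList k a) (ofList k m)) (ofList k b) := by
  obtain ⟨c, m₁, rfl⟩ := List.exists_cons_of_ne_nil hm
  rw [cat_ofList_ofList]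
  rcases List.eq_nil_or_concat' a with rfl | ⟨a₀, e, rfl⟩
  · rw [ofList_nil, one_d, one_d, cat_ofList_ofList]
  · by_cases hec : Compatible e c
    · rw [D.d_ofList_ofList (by simpa using hec), D.d_ofList_ofList (by simpa using hec),
        cat_ofList_ofList]
      simp
    · obtain ⟨α, β, rfl, rfl⟩ := not_compatible_iff.1 hec
      rw [List.cons_append, d_ofList_br, d_ofList_br, ← cat_ofList_ofList m₁ b]
      simp only [cat_assoc]

theorem d_cat_left (x : RBMod k X) {y : RBMod k X} (hy : eps k X y = 0) (z : RBMod k X) :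
    D.d (cat k X x y) z = cat k X x (D.d y z) := by
  induction x using induction_on with
  | zero => simp
  | add x x' hx hx' => simp only [map_add, LinearMap.add_apply, hx, hx']
  | smul c x hx => simp only [map_smul, LinearMap.smul_apply, hx]
  | sing a =>
  induction z using induction_on with
  | zero => simp
  | add z z' hz hz' => simp only [map_add, hz, hz']
  | smul c z hz => simp only [map_smul, hz]
  | sing b =>
  have key := apply_eq_of_eps_eq_zero
    (f := (D.d.flip (sing k b)).comp (cat k X (sing k a)))
    (g := (cat k X (sing k a)).comp (D.d.flip (sing k b))) (fun m hm => by
      simpa only [LinearMap.comp_apply, LinearMap.flip_apply, sing_eq_ofList] using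
        D.d_cat_ofList_left a.1 (fun h => hm (Subtype.ext h)) b.1) hy
  simpa only [LinearMap.comp_apply, LinearMap.flip_apply] using key

theorem d_cat_right (x : RBMod k X) {y : RBMod k X} (hy : eps k X y = 0) (z : RBMod k X) :
    D.d x (cat k X y z) = cat k X (D.d x y) z := by
  induction x using induction_on with
  | zero => simp
  | add x x' hx hx' => simp only [map_add, LinearMap.add_apply, hx, hx']
  | smul c x hx => simp only [map_smul, LinearMap.smul_apply, hx]
  | sing a =>
  induction z using induction_on with
  | zero => simp
  | add z z' hz hz' => simp only [map_add, hz, hz']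
  | smul c z hz => simp only [map_smul, hz]
  | sing b =>
  have key := apply_eq_of_eps_eq_zero
    (f := (D.d (sing k a)).comp ((cat k X).flip (sing k b)))
    (g := ((cat k X).flip (sing k b)).comp (D.d (sing k a))) (fun m hm => by
      simpa only [LinearMap.comp_apply, LinearMap.flip_apply, sing_eq_ofList] using
        D.d_cat_ofList_right a.1 (fun h => hm (Subtype.ext h)) b.1) hy
  simpa only [LinearMap.comp_apply, LinearMap.flip_apply] using key

theorem d_ofList_var_left (x : X) (z : RBMod k X) :
    D.d (ofList k [var x]) z = cat k X (ofList k [var x]) z := by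
  induction z using induction_on with
  | zero => simp
  | add z z' hz hz' => simp only [map_add, hz, hz']
  | smul c z hz => simp only [map_smul, hz]
  | sing w =>
    rw [sing_eq_ofList, cat_ofList_ofList, D.d_ofList_ofList]
    simp [Compatible, isBr]

theorem d_ofList_var_right (x : X) (z : RBMod k X) :
    D.d z (ofList k [var x]) = cat k X z (ofList k [var x]) := by
  induction z using induction_on with
  | zero => simp
  | add z z' hz hz' => simp only [map_add, LinearMap.add_apply, hz, hz']
  | smul c z hz => simp only [map_smul, LinearMap.smul_apply, hz]
  | sing w =>
    rw [sing_eq_ofList, cat_ofList_ofList, D.d_ofList_ofList]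
    simp [Compatible, isBr]

end FreeRBAData

namespace RBL

variable {X : Type u} {R : Type*} [Ring R]

mutual
  def liftLetter (Q : R → R) (f : X → R) : RBL X → R
    | var x => f x
    | br l => Q (liftWord Q f l)
  def liftWord (Q : R → R) (f : X → R) : List (RBL X) → R
    | [] => 1
    | a :: l => liftLetter Q f a * liftWord Q f l
end

variable (Q : R → R) (f : X → R)

theorem liftLetter_var (x : X) : liftLetter Q f (var x) = f x := by
  simp [liftLetter]

theorem liftLetter_br (l : List (RBL X)) : liftLetter Q f (br l) = Q (liftWord Q f l) := by
  simp [liftLetter]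

theorem liftWord_nil : liftWord Q f ([] : List (RBL X)) = 1 := by
  simp [liftWord]

theorem liftWord_cons (a : RBL X) (l : List (RBL X)) :
    liftWord Q f (a :: l) = liftLetter Q f a * liftWord Q f l := by
  simp [liftWord]

theorem liftWord_append (l₁ l₂ : List (RBL X)) :
    liftWord Q f (l₁ ++ l₂) = liftWord Q f l₁ * liftWord Q f l₂ := by
  induction l₁ with
  | nil => rw [List.nil_append, liftWord_nil, one_mul]
  | cons a t ih => rw [List.cons_append, liftWord_cons, liftWord_cons, ih, mul_assoc]

end RBL

namespace RBMod

open RBL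

variable {k : Type v} [CommRing k] {X : Type u} {R : Type*} [Ring R] [Algebra k R]
  (Q : R →ₗ[k] R) (f : X → R)

noncomputable def lift : RBMod k X →ₗ[k] R :=
  Finsupp.linearCombination k fun w : RBWord X => liftWord Q f w.1

theorem lift_ofList {l : List (RBL X)} (h : wordValid l) :
    lift Q f (ofList k l) = liftWord Q f l := by
  rw [ofList_of_wordValid h]
  exact (Finsupp.linearCombination_single k _ _).trans (one_smul k _)

theorem lift_one : lift Q f (sing k RBWord.one) = 1 := by
  rw [← ofList_nil, lift_ofList Q f wordValid_nil, liftWord_nil]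

theorem lift_var (x : X) : lift Q f (sing k ⟨[var x], wordValid_var x⟩) = f x := by
  rw [← ofList_of_wordValid, lift_ofList Q f (wordValid_var x), liftWord_cons, liftWord_nil,
    liftLetter_var, mul_one]

theorem lift_Pop (x : RBMod k X) : lift Q f (Pop k X x) = Q (lift Q f x) := by
  induction x using induction_on with
  | zero => simp
  | add x x' hx hx' => simp only [map_add, hx, hx']
  | smul c x hx => simp only [map_smul, hx]
  | sing w =>
    rw [sing_eq_ofList, Pop_ofList, lift_ofList Q f w.2, lift_ofList Q f (wordValid_br w.2),
      liftWord_cons, liftWord_nil, liftLetter_br, mul_one]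

theorem lift_cat_Pop_cat {u w a b : List (RBL X)} (hu : wordValid (u ++ [br a]))
    (hw : wordValid (br b :: w)) (t : RBMod k X) :
    lift Q f (cat k X (cat k X (ofList k u) (Pop k X t)) (ofList k w))
      = liftWord Q f u * Q (lift Q f t) * liftWord Q f w := by
  induction t using induction_on with
  | zero => simp
  | add t t' ht ht' => simp only [map_add, LinearMap.add_apply, ht, ht', mul_add, add_mul]
  | smul c t ht =>
    simp only [map_smul, LinearMap.smul_apply, ht, mul_smul_comm, smul_mul_assoc]
  | sing s =>
    rw [sing_eq_ofList, Pop_ofList, cat_ofList_ofList, cat_ofList_ofList,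
      lift_ofList Q f (wordValid_append_br_append hu hw s.2), lift_ofList Q f s.2,
      liftWord_append, liftWord_append, liftWord_cons, liftWord_nil, liftLetter_br, mul_one]

theorem eps_eq_lift : eps k X = lift (0 : k →ₗ[k] k) 0 := by
  refine lhom_ext fun w => ?_
  rw [sing_eq_ofList, lift_ofList _ _ w.2, ← sing_eq_ofList]
  obtain ⟨_ | ⟨a, l⟩, hw⟩ := w
  · exact Finsupp.single_eq_same
  · have hl : liftLetter (0 : k →ₗ[k] k) 0 a = 0 := by
      cases a <;> simp [liftLetter_var, liftLetter_br]
    rw [liftWord_cons, hl, zero_mul]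
    exact Finsupp.single_eq_of_ne (fun h => List.cons_ne_nil a l (congrArg Subtype.val h).symm)

theorem eps_ofList_of_ne_nil {l : List (RBL X)} (hl : l ≠ []) : eps k X (ofList k l) = 0 := by
  by_cases h : wordValid l
  · rw [ofList_of_wordValid h]
    exact Finsupp.single_eq_of_ne (fun h' => hl (congrArg Subtype.val h').symm)
  · rw [ofList_of_not_wordValid h, map_zero]

end RBMod

namespace FreeRBAData

open RBL RBMod

variable {k : Type v} [CommRing k] {X : Type u} {lam : k} (D : FreeRBAData k X lam)
  {R : Type*} [Ring R] [Algebra k R] {Q : R →ₗ[k] R} (f : X → R)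

theorem lift_d_ofList
    (hQ : ∀ u v : R, Q u * Q v = Q (u * Q v) + Q (Q u * v) + lam • Q (u * v))
    {u w : List (RBL X)} (hu : wordValid u) (hw : wordValid w) :
    lift Q f (D.d (ofList k u) (ofList k w)) = liftWord Q f u * liftWord Q f w := by
  induction hn : degW u + degW w using Nat.strong_induction_on generalizing u w with
  | _ n ih =>
  rcases List.eq_nil_or_concat' u with rfl | ⟨u₀, c, rfl⟩
  · rw [ofList_nil, one_d, lift_ofList Q f hw, liftWord_nil, one_mul]
  cases w with
  | nil => rw [ofList_nil, d_one, lift_ofList Q f hu, liftWord_nil, mul_one]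
  | cons e w₀ =>
  by_cases hce : Compatible c e
  · have hj : ∀ a ∈ (u₀ ++ [c]).getLast?, ∀ b ∈ (e :: w₀).head?, Compatible a b := by
      simpa using hce
    rw [D.d_ofList_ofList hj, lift_ofList Q f ((wordValid_append_iff _ _).2 ⟨hu, hw, hj⟩),
      liftWord_append]
  obtain ⟨α, β, rfl, rfl⟩ := not_compatible_iff.1 hce
  have hα := hu.of_append_br
  have hβ := hw.of_br_cons
  simp only [degW_append, degW_cons, degL_br] at hn
  rw [d_ofList_br, D.d_Pop_Pop, lift_cat_Pop_cat Q f hu hw, Pop_ofList, Pop_ofList]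
  simp only [map_add, map_smul]
  have hα' := wordValid_br hα
  have hβ' := wordValid_br hβ
  rw [ih _ (by simp only [degW_cons, degL_br]; omega) hα hβ' rfl,
    ih _ (by simp only [degW_cons, degL_br]; omega) hα' hβ rfl, ih _ (by omega) hα hβ rfl]
  simp only [liftWord_append, liftWord_cons, liftWord_nil, liftLetter_br, mul_one]
  rw [← hQ, mul_assoc, mul_assoc, mul_assoc]

theorem lift_d (hQ : ∀ u v : R, Q u * Q v = Q (u * Q v) + Q (Q u * v) + lam • Q (u * v))
    (x y : RBMod k X) : lift Q f (D.d x y) = lift Q f x * lift Q f y := by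
  induction x using induction_on with
  | zero => simp
  | add x x' hx hx' => simp only [map_add, LinearMap.add_apply, hx, hx', add_mul]
  | smul c x hx => simp only [map_smul, LinearMap.smul_apply, hx, smul_mul_assoc]
  | sing u =>
  induction y using induction_on with
  | zero => simp
  | add y y' hy hy' => simp only [map_add, hy, hy', mul_add]
  | smul c y hy => simp only [map_smul, hy, mul_smul_comm]
  | sing w =>
  rw [sing_eq_ofList, sing_eq_ofList, D.lift_d_ofList f hQ u.2 w.2, lift_ofList Q f u.2,
    lift_ofList Q f w.2]

theorem lift_unique (ψ : RBMod k X →ₗ[k] R) (h_one : ψ (sing k RBWord.one) = 1)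
    (h_d : ∀ a b : RBMod k X, ψ (D.d a b) = ψ a * ψ b)
    (h_Pop : ∀ a : RBMod k X, ψ (Pop k X a) = Q (ψ a))
    (h_var : ∀ x : X, ψ (sing k ⟨[var x], wordValid_var x⟩) = f x) :
    ψ = lift Q f := by
  suffices key : ∀ l, wordValid l → ψ (ofList k l) = liftWord Q f l from
    lhom_ext fun w => by rw [sing_eq_ofList, key w.1 w.2, lift_ofList Q f w.2]
  intro l hl
  induction hn : degW l using Nat.strong_induction_on generalizing l with
  | _ n ih =>
  cases l with
  | nil => rw [ofList_nil, h_one, liftWord_nil]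
  | cons a t =>
  have hsplit := (wordValid_append_iff [a] t).1 hl
  rw [← List.singleton_append, ← D.d_ofList_ofList hsplit.2.2, h_d,
    ih _ (by rw [← hn, degW_cons]; have := degL_pos a; omega) t hsplit.2.1 rfl,
    liftWord_append]
  congr 1
  cases a with
  | var x =>
    rw [ofList_of_wordValid (wordValid_var x), h_var, liftWord_cons, liftWord_nil,
      liftLetter_var, mul_one]
  | br m =>
    have hm := wordValid_singleton_br_iff.1 hsplit.1
    rw [← Pop_ofList, h_Pop, ih _ (by rw [← hn, degW_cons, degL_br]; omega) m hm rfl,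
      liftWord_cons, liftWord_nil, liftLetter_br, mul_one]

theorem eps_d (x y : RBMod k X) : eps k X (D.d x y) = eps k X x * eps k X y := by
  rw [eps_eq_lift]
  exact D.lift_d 0 (by simp) x y

end FreeRBAData

theorem assoc_of_rotaBaxter {k : Type v} [CommRing k] {M : Type*} [AddCommGroup M] [Module k M]
    (μ : M →ₗ[k] M →ₗ[k] M) (P : M →ₗ[k] M) {lam : k}
    (hP : ∀ x y, μ (P x) (P y) = P (μ x (P y) + μ (P x) y + lam • μ x y)) {x y z : M}
    (h₁ : μ (μ x (P y)) (P z) = μ x (μ (P y) (P z)))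
    (h₂ : μ (μ (P x) y) (P z) = μ (P x) (μ y (P z)))
    (h₃ : μ (μ (P x) (P y)) z = μ (P x) (μ (P y) z))
    (h₄ : μ (μ x y) (P z) = μ x (μ y (P z)))
    (h₅ : μ (μ x (P y)) z = μ x (μ (P y) z))
    (h₆ : μ (μ (P x) y) z = μ (P x) (μ y z))
    (h₇ : μ (μ x y) z = μ x (μ y z)) :
    μ (μ (P x) (P y)) (P z) = μ (P x) (μ (P y) (P z)) := by
  rw [hP x y, hP y z, hP, hP, ← hP x y, ← hP y z]
  congr 1
  simp only [map_add, map_smul, LinearMap.add_apply, LinearMap.smul_apply, smul_add]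
  rw [h₁, h₂, h₃, h₄, h₅, h₆, h₇]
  abel

namespace FreeRBAData

open RBL RBMod

variable {k : Type v} [CommRing k] {X : Type u} {lam : k} (D : FreeRBAData k X lam)

theorem d_assoc_cat_left (x : RBMod k X) {y : RBMod k X} (hy : eps k X y = 0) {v w : RBMod k X}
    (h : D.d (D.d y v) w = D.d y (D.d v w)) :
    D.d (D.d (cat k X x y) v) w = D.d (cat k X x y) (D.d v w) := by
  have hyv : eps k X (D.d y v) = 0 := by rw [eps_d, hy, zero_mul]
  rw [D.d_cat_left x hy, D.d_cat_left x hyv, h, D.d_cat_left x hy]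

theorem d_assoc_cat_right {y : RBMod k X} (hy : eps k X y = 0) {u v : RBMod k X}
    (h : D.d (D.d u v) y = D.d u (D.d v y)) (z : RBMod k X) :
    D.d (D.d u v) (cat k X y z) = D.d u (D.d v (cat k X y z)) := by
  have hvy : eps k X (D.d v y) = 0 := by rw [eps_d, hy, mul_zero]
  rw [D.d_cat_right _ hy, h, ← D.d_cat_right u hvy, ← D.d_cat_right v hy]

theorem d_assoc_cat_middle {y y' : RBMod k X} (hy : eps k X y = 0) (hy' : eps k X y' = 0)
    (u w : RBMod k X) :
    D.d (D.d u (cat k X y y')) w = D.d u (D.d (cat k X y y') w) := by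
  rw [D.d_cat_right u hy, D.d_cat_left _ hy', D.d_cat_left y hy', D.d_cat_right u hy]

theorem d_assoc_var_left (x : X) {v : RBMod k X} (hv : eps k X v = 0) (w : RBMod k X) :
    D.d (D.d (ofList k [var x]) v) w = D.d (ofList k [var x]) (D.d v w) := by
  rw [d_ofList_var_left, d_ofList_var_left, D.d_cat_left _ hv]

theorem d_assoc_var_right (u : RBMod k X) {v : RBMod k X} (hv : eps k X v = 0) (x : X) :
    D.d (D.d u v) (ofList k [var x]) = D.d u (D.d v (ofList k [var x])) := by
  rw [d_ofList_var_right, d_ofList_var_right, D.d_cat_right _ hv]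

theorem d_assoc_var_middle (u : RBMod k X) (x : X) (w : RBMod k X) :
    D.d (D.d u (ofList k [var x])) w = D.d u (D.d (ofList k [var x]) w) := by
  have hx : eps k X (ofList k [var x]) = 0 := eps_ofList_of_ne_nil (List.cons_ne_nil _ _)
  rw [D.d_ofList_var_right x u, D.d_cat_left u hx, D.d_ofList_var_left x w, D.d_cat_right u hx,
    D.d_ofList_var_right x u, cat_assoc]

theorem d_assoc_letters {a b c : RBL X} (ha : wordValid [a]) (hb : wordValid [b])
    (hc : wordValid [c])
    (ih : ∀ u v w, wordValid u → wordValid v → wordValid w →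
      degW u + degW v + degW w < degW [a] + degW [b] + degW [c] →
      D.d (D.d (ofList k u) (ofList k v)) (ofList k w)
        = D.d (ofList k u) (D.d (ofList k v) (ofList k w))) :
    D.d (D.d (ofList k [a]) (ofList k [b])) (ofList k [c])
      = D.d (ofList k [a]) (D.d (ofList k [b]) (ofList k [c])) := by
  have eps_single (e : RBL X) : eps k X (ofList k [e]) = 0 :=
    eps_ofList_of_ne_nil (List.cons_ne_nil _ _)
  cases a with
  | var x => exact D.d_assoc_var_left x (eps_single _) _
  | br α =>
  cases c with
  | var x => exact D.d_assoc_var_right _ (eps_single _) x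
  | br γ =>
  cases b with
  | var x => exact D.d_assoc_var_middle _ x _
  | br β =>
  have hα := wordValid_singleton_br_iff.1 ha
  have hβ := wordValid_singleton_br_iff.1 hb
  have hγ := wordValid_singleton_br_iff.1 hc
  simp only [degW_singleton_br] at ih
  simp only [← Pop_ofList]
  refine assoc_of_rotaBaxter D.d (Pop k X) D.d_Pop_Pop ?_ ?_ ?_ ?_ ?_ ?_ ?_
  · simpa only [Pop_ofList] using
      ih α [br β] [br γ] hα hb hc (by simp only [degW_singleton_br]; omega)
  · simpa only [Pop_ofList] using
      ih [br α] β [br γ] ha hβ hc (by simp only [degW_singleton_br]; omega)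
  · simpa only [Pop_ofList] using
      ih [br α] [br β] γ ha hb hγ (by simp only [degW_singleton_br]; omega)
  · simpa only [Pop_ofList] using
      ih α β [br γ] hα hβ hc (by simp only [degW_singleton_br]; omega)
  · simpa only [Pop_ofList] using
      ih α [br β] γ hα hb hγ (by simp only [degW_singleton_br]; omega)
  · simpa only [Pop_ofList] using
      ih [br α] β γ ha hβ hγ (by simp only [degW_singleton_br]; omega)
  · exact ih α β γ hα hβ hγ (by omega)

theorem d_assoc_ofList {u v w : List (RBL X)} (hu : wordValid u) (hv : wordValid v)
    (hw : wordValid w) :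
    D.d (D.d (ofList k u) (ofList k v)) (ofList k w)
      = D.d (ofList k u) (D.d (ofList k v) (ofList k w)) := by
  induction hn : degW u + degW v + degW w using Nat.strong_induction_on generalizing u v w with
  | _ n ih =>
  rcases List.eq_nil_or_concat' u with rfl | ⟨u₀, a, rfl⟩
  · rw [ofList_nil, one_d, one_d]
  rcases v with _ | ⟨b, v₀⟩
  · rw [ofList_nil, d_one, one_d]
  rcases w with _ | ⟨c, w₀⟩
  · rw [ofList_nil, d_one, d_one]
  have eps_single (e : RBL X) : eps k X (ofList k [e]) = 0 :=
    eps_ofList_of_ne_nil (List.cons_ne_nil _ _)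
  rcases eq_or_ne u₀ [] with rfl | hu₀
  swap
  · rw [← cat_ofList_ofList u₀ [a]]
    refine D.d_assoc_cat_left _ (eps_single a) (ih _ ?_ hu.of_append_right hv hw rfl)
    have := degW_pos hu₀
    rw [← hn, degW_append]
    omega
  rcases eq_or_ne w₀ [] with rfl | hw₀
  swap
  · rw [ofList_cons_eq_cat c w₀]
    refine D.d_assoc_cat_right (eps_single c) (ih _ ?_ hu hv (wordValid.of_append_left hw) rfl) _
    have := degW_pos hw₀
    rw [← hn]
    simp only [degW_cons, degW_nil]
    omega
  rcases eq_or_ne v₀ [] with rfl | hv₀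
  swap
  · rw [ofList_cons_eq_cat b v₀]
    exact D.d_assoc_cat_middle (eps_single b) (eps_ofList_of_ne_nil hv₀) _ _
  rw [List.nil_append] at hu hn ⊢
  exact D.d_assoc_letters hu hv hw fun _ _ _ hu hv hw hd => ih _ (hn ▸ hd) hu hv hw rfl

theorem d_assoc (x y z : RBMod k X) : D.d (D.d x y) z = D.d x (D.d y z) := by
  induction x using induction_on with
  | zero => simp
  | add x x' hx hx' => simp only [map_add, LinearMap.add_apply, hx, hx']
  | smul c x hx => simp only [map_smul, LinearMap.smul_apply, hx]
  | sing u =>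
  induction y using induction_on with
  | zero => simp
  | add y y' hy hy' => simp only [map_add, LinearMap.add_apply, hy, hy']
  | smul c y hy => simp only [map_smul, LinearMap.smul_apply, hy]
  | sing v =>
  induction z using induction_on with
  | zero => simp
  | add z z' hz hz' => simp only [map_add, hz, hz']
  | smul c z hz => simp only [map_smul, hz]
  | sing w =>
  simp only [sing_eq_ofList]
  exact D.d_assoc_ofList u.2 v.2 w.2

end FreeRBAData

/-- `(kX_∞, ⋄, P)` is the free Rota-Baxter algebra of weight `lam` on `X`:
`(kX_∞, ⋄)` is a unital associative `k`-algebra, `P` satisfies the Rota-Baxter identity, and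
for every Rota-Baxter algebra `(R, Q)` of weight `lam` and every set map `f : X → R` there is
a unique `k`-algebra homomorphism `φ : kX_∞ → R` with `φ ∘ P = Q ∘ φ` and `φ(j_X(x)) = f(x)`. -/
theorem free_rota_baxter_algebra
    {k : Type v} [CommRing k] {X : Type u} {lam : k} (D : FreeRBAData k X lam) :
    (∀ f : RBMod k X, D.d (sing k RBWord.one) f = f) ∧
    (∀ f : RBMod k X, D.d f (sing k RBWord.one) = f) ∧
    (∀ f g h : RBMod k X, D.d (D.d f g) h = D.d f (D.d g h)) ∧
    (∀ f g : RBMod k X,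
      D.d (Pop k X f) (Pop k X g)
        = Pop k X (D.d f (Pop k X g)) + Pop k X (D.d (Pop k X f) g)
          + lam • Pop k X (D.d f g)) ∧
    (∀ (R : Type w) [Ring R] [Algebra k R] (Q : R →ₗ[k] R),
      (∀ u v : R, Q u * Q v = Q (u * Q v) + Q (Q u * v) + lam • Q (u * v)) →
      ∀ f : X → R, ∃! φ : RBMod k X →ₗ[k] R,
        φ (sing k RBWord.one) = 1 ∧
        (∀ a b : RBMod k X, φ (D.d a b) = φ a * φ b) ∧
        (∀ a : RBMod k X, φ (Pop k X a) = Q (φ a)) ∧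
        (∀ x : X, φ (sing k ⟨[RBL.var x], RBL.wordValid_var x⟩) = f x)) := by
  refine ⟨D.one_d, D.d_one, D.d_assoc, fun x y => ?_, fun R _ _ Q hQ f => ?_⟩
  · rw [D.d_Pop_Pop, map_add, map_add, map_smul]
  exact ⟨RBMod.lift Q f,
    ⟨RBMod.lift_one Q f, D.lift_d f hQ, RBMod.lift_Pop Q f, RBMod.lift_var Q f⟩,
    fun ψ ⟨h₁, h₂, h₃, h₄⟩ => D.lift_unique f ψ h₁ h₂ h₃ h₄⟩
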